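/- Let n ≥ 2 and let Ω ⊊ ℝⁿ be a nonempty open set whose boundary ∂Ω is unbounded and lower Ahlfors regular, i.e., there is c > 0 with ℋ^{n−1}(∂Ω ∩ B(x,r)) ≥ c·r^{n−1} for all x ∈ ∂Ω and r ∈ (0,∞); set σ := ℋ^{n−1} restricted to ∂Ω. Fix κ > 0, q ∈ [1,∞), and let u : Ω → ℝ be continuous with N_κ u ∈ L^q(∂Ω,σ). Then for every 0 < a ≤ b < ∞ one has u(x) → 0 as |x| → ∞ within the slab { x ∈ Ω : a ≤ dist(x,∂Ω) ≤ b }; i.e., for every δ > 0 there is R > 0 such that |u(x)| ≤ δ whenever x ∈ Ω, |x| ≥ R, and a ≤ dist(x,∂Ω) ≤ b. -/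

import Mathlib

open MeasureTheory Metric Set Filter
open scoped ENNReal NNReal Topology

noncomputable section

abbrev Euc (n : ℕ) : Type := EuclideanSpace ℝ (Fin n)

variable {n : ℕ}

/-- The nontangential approach region `Γ_κ(x)` to `∂Ω` from within `Ω`. -/
def ntRegion (Ω : Set (Euc n)) (κ : ℝ) (x : Euc n) : Set (Euc n) :=
  {y | y ∈ Ω ∧ dist x y < (1 + κ) * infDist y (frontier Ω)}

/-- The one-sided collar neighborhood `O_ε` of `∂Ω`. -/
def collar (Ω : Set (Euc n)) (ε : ℝ) : Set (Euc n) :=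
  {y | y ∈ Ω ∧ infDist y (frontier Ω) < ε}

/-- Nontangential maximal function of `u` restricted to a set `S` (truncated version). -/
def ntMaxOn {E : Type*} [NormedAddCommGroup E] (Ω S : Set (Euc n)) (κ : ℝ)
    (u : Euc n → E) (x : Euc n) : ℝ≥0∞ :=
  essSup (fun y => (‖u y‖₊ : ℝ≥0∞)) (volume.restrict (ntRegion Ω κ x ∩ S))

/-- Nontangential maximal function `N_κ u`. -/
def ntMax {E : Type*} [NormedAddCommGroup E] (Ω : Set (Euc n)) (κ : ℝ)
    (u : Euc n → E) (x : Euc n) : ℝ≥0∞ :=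
  essSup (fun y => (‖u y‖₊ : ℝ≥0∞)) (volume.restrict (ntRegion Ω κ x))

/-- `u` has κ-nontangential trace `v` at the boundary point `x`. -/
def HasNTTrace {E : Type*} [NormedAddCommGroup E] (Ω : Set (Euc n)) (κ : ℝ)
    (u : Euc n → E) (x : Euc n) (v : E) : Prop :=
  x ∈ closure (ntRegion Ω κ x) ∧
  ∃ N : Set (Euc n), N ⊆ ntRegion Ω κ x ∧ volume N = 0 ∧
    Tendsto u (nhdsWithin x (ntRegion Ω κ x \ N)) (nhds v)

/-- `Sig` is an Ahlfors regular set (of dimension `n-1`) with constant `C`. -/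
def AhlforsRegularWith (n : ℕ) (Sig : Set (Euc n)) (C : ℝ) : Prop :=
  1 < C ∧ IsClosed Sig ∧ ∀ x ∈ Sig, ∀ r : ℝ, 0 < r →
    ENNReal.ofReal r < 2 * EMetric.diam Sig →
    ENNReal.ofReal (C⁻¹ * r ^ (n - 1)) ≤ μH[(n : ℝ) - 1] (Sig ∩ ball x r) ∧
      μH[(n : ℝ) - 1] (Sig ∩ ball x r) ≤ ENNReal.ofReal (C * r ^ (n - 1))

/-- The measure-theoretic (geometric measure theoretic) boundary `∂*Ω`. -/
def mtBoundary (n : ℕ) (Ω : Set (Euc n)) : Set (Euc n) :=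
  {x | 0 < limsup (fun r : ℝ => volume (Ω ∩ ball x r) / ENNReal.ofReal (r ^ n)) (𝓝[>] 0) ∧
       0 < limsup (fun r : ℝ => volume (Ωᶜ ∩ ball x r) / ENNReal.ofReal (r ^ n)) (𝓝[>] 0)}

/-- The nontangentially accessible boundary `∂_nta Ω`. -/
def ntaBoundary (n : ℕ) (Ω : Set (Euc n)) : Set (Euc n) :=
  {x | x ∈ frontier Ω ∧ ∀ κ : ℝ, 0 < κ → x ∈ closure (ntRegion Ω κ x)}

/-- The Laplacian `Δu = ∑ ∂²u/∂x_j²`, via iterated Fréchet derivatives. -/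
def laplacian (u : Euc n → ℝ) (x : Euc n) : ℝ :=
  ∑ i : Fin n, fderiv ℝ (fun z => fderiv ℝ u z (EuclideanSpace.single i 1)) x
    (EuclideanSpace.single i 1)

/-- `u` is harmonic on the open set `Ω`. -/
def HarmonicOn' (u : Euc n → ℝ) (Ω : Set (Euc n)) : Prop :=
  ContDiffOn ℝ 2 u Ω ∧ ∀ x ∈ Ω, laplacian u x = 0

/-- `w` is (continuous and) subharmonic on the open set `Ω`, via the sub-mean value property. -/
def SubharmonicOn (w : Euc n → ℝ) (Ω : Set (Euc n)) : Prop :=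
  ContinuousOn w Ω ∧ ∀ x ∈ Ω, ∀ r : ℝ, 0 < r → closedBall x r ⊆ Ω →
    w x ≤ ⨍ y in ball x r, w y

/-- `Sig` is a uniformly rectifiable (UR) set: closed, Ahlfors regular, with
Big Pieces of Lipschitz Images. -/
def IsURSet (n : ℕ) (Sig : Set (Euc n)) : Prop :=
  IsClosed Sig ∧ (∃ C : ℝ, AhlforsRegularWith n Sig C) ∧
  ∃ ε : ℝ, 0 < ε ∧ ∃ M₀ : ℝ≥0, ∀ x ∈ Sig, ∀ r : ℝ, 0 < r →
    ENNReal.ofReal r < EMetric.diam Sig →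
    ∃ Φ : EuclideanSpace ℝ (Fin (n - 1)) → Euc n, LipschitzWith M₀ Φ ∧
      ENNReal.ofReal (ε * r ^ (n - 1)) ≤
        μH[(n : ℝ) - 1] (Sig ∩ ball x r ∩ Φ '' ball (0 : EuclideanSpace ℝ (Fin (n - 1))) r)

end

/-! If the points of the slab where `|u| > δ` were unbounded, infinitely many of them could be
chosen pairwise far apart. Around their nearest boundary points, the boundary balls of radius
`κ a` are then disjoint, `N_κ u ≥ δ` on each of them (each such ball sees the chosen point inside
its cones), and each carries `σ`-mass at least `c (κ a)^(n-1)` by lower Ahlfors regularity;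
so `∫ (N_κ u)^q dσ = ∞`. -/

open Function

theorem LowerSemicontinuousAt.le_essSup_restrict {X : Type*} [TopologicalSpace X]
    [MeasurableSpace X] {μ : Measure X} [μ.IsOpenPosMeasure] {f : X → ℝ≥0∞} {x : X}
    {V : Set X} (hf : LowerSemicontinuousAt f x) (hV : V ∈ 𝓝 x) :
    f x ≤ essSup f (μ.restrict V) := by
  by_contra! hlt
  obtain ⟨W, hWsub, hWo, hxW⟩ := mem_nhds_iff.1 (inter_mem hV (hf _ hlt))
  have hpos : 0 < μ.restrict V W := calc
    0 < μ W := hWo.measure_pos μ ⟨x, hxW⟩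
    _ = μ (W ∩ V) := by rw [inter_eq_left.2 fun y hy => (hWsub hy).1]
    _ ≤ μ.restrict V W := Measure.le_restrict_apply V W
  exact hpos.ne' (measure_mono_null (fun y hy => (hWsub hy).2) meas_essSup_lt)

theorem exists_seq_le_dist_of_not_isBounded {α : Type*} [PseudoMetricSpace α] {s : Set α}
    (hs : ¬Bornology.IsBounded s) (D : ℝ) :
    ∃ x : ℕ → α, (∀ i, x i ∈ s) ∧ Pairwise fun i j => D ≤ dist (x i) (x j) := by
  obtain ⟨p, -⟩ := Bornology.nonempty_of_not_isBounded hs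
  have hfar : ∀ R, ∃ y ∈ s, R < dist y p := by
    intro R
    by_contra! h
    exact hs ((isBounded_iff_subset_closedBall p).2 ⟨R, fun y hy => mem_closedBall.2 (h y hy)⟩)
  choose f hfs hfd using fun y : α => hfar (dist y p + |D|)
  set x : ℕ → α := fun k => f^[k] (f p)
  have hxs : ∀ k, x k ∈ s := by
    rintro (_ | k)
    · exact hfs p
    · simp only [x, Function.iterate_succ_apply', hfs]
  have hstep : ∀ k, dist (x k) p + |D| ≤ dist (x (k + 1)) p := fun k => by
    simpa only [x, Function.iterate_succ_apply'] using (hfd (x k)).le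
  have hmono : Monotone fun k => dist (x k) p :=
    monotone_nat_of_le_succ fun k => by linarith [hstep k, abs_nonneg D]
  have hsep : ∀ i j, i < j → D ≤ dist (x i) (x j) := fun i j hij => by
    linarith [hstep i, hmono (Nat.succ_le_of_lt hij), le_abs_self D,
      dist_triangle (x j) (x i) p, dist_comm (x i) (x j)]
  refine ⟨x, hxs, fun i j hij => ?_⟩
  rcases hij.lt_or_gt with h | h
  · exact hsep i j h
  · exact dist_comm (x i) (x j) ▸ hsep j i h

theorem lintegral_eq_top_of_pairwise_disjoint {α ι : Type*} [MeasurableSpace α] [Countable ι]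
    [Infinite ι] {μ : Measure α} {f : α → ℝ≥0∞} {s : ι → Set α} {ε : ℝ≥0∞}
    (hs : ∀ i, MeasurableSet (s i)) (hd : Pairwise (Disjoint on s)) (hε : ε ≠ 0)
    (h : ∀ i, ε ≤ ∫⁻ x in s i, f x ∂μ) : ∫⁻ x, f x ∂μ = ∞ := by
  refine top_le_iff.1 ?_
  calc ∞ = ∑' _ : ι, ε := (ENNReal.tsum_const_eq_top_of_ne_zero hε).symm
    _ ≤ ∑' i, ∫⁻ x in s i, f x ∂μ := ENNReal.tsum_le_tsum h
    _ = ∫⁻ x in ⋃ i, s i, f x ∂μ := (lintegral_iUnion hs hd f).symm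
    _ ≤ ∫⁻ x, f x ∂μ := setLIntegral_le_lintegral _ _

theorem mul_le_setLIntegral_restrict {α : Type*} [MeasurableSpace α] {μ : Measure α}
    {s t : Set α} {f : α → ℝ≥0∞} {c : ℝ≥0∞} (hs : MeasurableSet s) (ht : MeasurableSet t)
    (hf : ∀ x ∈ s ∩ t, c ≤ f x) : c * μ (s ∩ t) ≤ ∫⁻ x in s, f x ∂μ.restrict t := calc
  c * μ (s ∩ t) = ∫⁻ _ in s ∩ t, c ∂μ := (setLIntegral_const _ _).symm
  _ ≤ ∫⁻ x in s ∩ t, f x ∂μ := setLIntegral_mono' (hs.inter ht) hf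
  _ = ∫⁻ x in s, f x ∂μ.restrict t := by rw [Measure.restrict_restrict hs]

section NontangentialRegion

variable {n : ℕ} {Ω : Set (Euc n)} {κ : ℝ}

theorem isOpen_ntRegion (hΩ : IsOpen Ω) (κ : ℝ) (x : Euc n) : IsOpen (ntRegion Ω κ x) :=
  hΩ.inter (isOpen_lt (continuous_const.dist continuous_id)
    (continuous_const.mul (continuous_infDist_pt _)))

theorem mem_ntRegion_of_dist_lt {y z w : Euc n} (hy : y ∈ Ω)
    (hz : dist y z ≤ infDist y (frontier Ω)) (hw : dist w z < κ * infDist y (frontier Ω)) :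
    y ∈ ntRegion Ω κ w := by
  refine ⟨hy, ?_⟩
  linarith [dist_triangle w z y, dist_comm y z]

theorem enorm_le_ntMax {E : Type*} [NormedAddCommGroup E] (hΩ : IsOpen Ω) {u : Euc n → E}
    {y w : Euc n} (hu : ContinuousAt u y) (hy : y ∈ ntRegion Ω κ w) :
    ‖u y‖ₑ ≤ ntMax Ω κ u w :=
  hu.enorm.lowerSemicontinuousAt.le_essSup_restrict ((isOpen_ntRegion hΩ κ w).mem_nhds hy)

end NontangentialRegion

theorem isBounded_slab_setOf_lt_abs {n : ℕ} {Ω : Set (Euc n)} (hΩ : IsOpen Ω) {c : ℝ} (hc : 0 < c)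
    (hlAR : ∀ x ∈ frontier Ω, ∀ r : ℝ, 0 < r →
      ENNReal.ofReal (c * r ^ (n - 1)) ≤ μH[(n : ℝ) - 1] (frontier Ω ∩ ball x r))
    {κ : ℝ} (hκ : 0 < κ) {q : ℝ} (hq : 0 ≤ q) {u : Euc n → ℝ} (hu : ContinuousOn u Ω)
    (hN : ∫⁻ x, (ntMax Ω κ u x) ^ q ∂((μH[(n : ℝ) - 1]).restrict (frontier Ω)) < ⊤)
    {a b δ : ℝ} (ha : 0 < a) (hδ : 0 < δ) :
    Bornology.IsBounded {x | x ∈ Ω ∧ a ≤ infDist x (frontier Ω) ∧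
      infDist x (frontier Ω) ≤ b ∧ δ < |u x|} := by
  by_contra hS
  set r := κ * a
  obtain ⟨y, hyS, hysep⟩ := exists_seq_le_dist_of_not_isBounded hS (2 * b + 2 * r)
  have hFne : (frontier Ω).Nonempty := by
    by_contra! hF
    linarith [(hyS 0).2.1, hF ▸ infDist_empty (x := y 0)]
  choose z hzF hzd using fun i => isClosed_frontier.exists_infDist_eq_dist hFne (y i)
  have hlarge : ∀ i, ∀ w ∈ ball (z i) r ∩ frontier Ω,
      ENNReal.ofReal δ ^ q ≤ ntMax Ω κ u w ^ q := by
    intro i w hw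
    obtain ⟨hyΩ, hya, -, hyu⟩ := hyS i
    have hy : y i ∈ ntRegion Ω κ w :=
      mem_ntRegion_of_dist_lt hyΩ (hzd i).ge
        (hw.1.trans_le (mul_le_mul_of_nonneg_left hya hκ.le))
    gcongr
    calc ENNReal.ofReal δ ≤ ‖u (y i)‖ₑ := by
          rw [← ofReal_norm]; exact ENNReal.ofReal_le_ofReal hyu.le
      _ ≤ ntMax Ω κ u w := enorm_le_ntMax hΩ (hu.continuousAt (hΩ.mem_nhds hyΩ)) hy
  have hdisj : Pairwise (Disjoint on fun i => ball (z i) r) := by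
    intro i j hij
    apply ball_disjoint_ball
    linarith [hysep hij, dist_triangle4 (y i) (z i) (z j) (y j), dist_comm (y j) (z j),
      hzd i ▸ (hyS i).2.2.1, hzd j ▸ (hyS j).2.2.1]
  have hball : ∀ i, ENNReal.ofReal δ ^ q * ENNReal.ofReal (c * r ^ (n - 1)) ≤
      ∫⁻ w in ball (z i) r, ntMax Ω κ u w ^ q ∂((μH[(n : ℝ) - 1]).restrict (frontier Ω)) :=
    fun i => calc
      _ ≤ ENNReal.ofReal δ ^ q * μH[(n : ℝ) - 1] (ball (z i) r ∩ frontier Ω) := by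
        rw [inter_comm]; gcongr; exact hlAR (z i) (hzF i) r (by positivity)
      _ ≤ _ := mul_le_setLIntegral_restrict measurableSet_ball
        isClosed_frontier.measurableSet (hlarge i)
  have hε : ENNReal.ofReal δ ^ q * ENNReal.ofReal (c * r ^ (n - 1)) ≠ 0 :=
    mul_ne_zero (ENNReal.rpow_pos (ENNReal.ofReal_pos.2 hδ) ENNReal.ofReal_ne_top).ne'
      (ENNReal.ofReal_pos.2 (by positivity)).ne'
  exact hN.ne <|
    lintegral_eq_top_of_pairwise_disjoint (fun _ => measurableSet_ball) hdisj hε hball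

theorem statement6_general (n : ℕ) (Ω : Set (Euc n)) (hΩ : IsOpen Ω)
    (c : ℝ) (hc : 0 < c)
    (hlAR : ∀ x ∈ frontier Ω, ∀ r : ℝ, 0 < r →
      ENNReal.ofReal (c * r ^ (n - 1)) ≤ μH[(n : ℝ) - 1] (frontier Ω ∩ ball x r))
    (κ : ℝ) (hκ : 0 < κ) (q : ℝ) (hq : 1 ≤ q)
    (u : Euc n → ℝ) (hu : ContinuousOn u Ω)
    (hN : ∫⁻ x, (ntMax Ω κ u x) ^ q ∂((μH[(n : ℝ) - 1]).restrict (frontier Ω)) < ⊤)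
    (a b : ℝ) (ha : 0 < a) (δ : ℝ) (hδ : 0 < δ) :
    ∃ R : ℝ, 0 < R ∧ ∀ x ∈ Ω, R ≤ ‖x‖ →
      a ≤ infDist x (frontier Ω) → infDist x (frontier Ω) ≤ b → |u x| ≤ δ := by
  obtain ⟨R, hR⟩ := isBounded_iff_forall_norm_le.1 <|
    isBounded_slab_setOf_lt_abs hΩ hc hlAR hκ (zero_le_one.trans hq) hu hN (b := b) ha hδ
  refine ⟨max R 0 + 1, by positivity, fun x hx hRx hxa hxb => not_lt.1 fun hxδ => ?_⟩
  linarith [hR x ⟨hx, hxa, hxb, hxδ⟩, le_max_left R 0]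

/-- decay at infinity within boundary slabs, for continuous functions whose
nontangential maximal function lies in `L^q`, on an open set with unbounded lower Ahlfors
regular boundary. -/
theorem statement6 (n : ℕ) (hn : 2 ≤ n) (Ω : Set (Euc n)) (hΩ : IsOpen Ω)
    (hne : Ω.Nonempty) (hprop : Ω ≠ univ)
    (hubd : ¬ Bornology.IsBounded (frontier Ω))
    (c : ℝ) (hc : 0 < c)
    (hlAR : ∀ x ∈ frontier Ω, ∀ r : ℝ, 0 < r →
      ENNReal.ofReal (c * r ^ (n - 1)) ≤ μH[(n : ℝ) - 1] (frontier Ω ∩ ball x r))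
    (κ : ℝ) (hκ : 0 < κ) (q : ℝ) (hq : 1 ≤ q)
    (u : Euc n → ℝ) (hu : ContinuousOn u Ω)
    (hN : ∫⁻ x, (ntMax Ω κ u x) ^ q ∂((μH[(n : ℝ) - 1]).restrict (frontier Ω)) < ⊤)
    (a b : ℝ) (ha : 0 < a) (hab : a ≤ b) (δ : ℝ) (hδ : 0 < δ) :
    ∃ R : ℝ, 0 < R ∧ ∀ x ∈ Ω, R ≤ ‖x‖ →
      a ≤ infDist x (frontier Ω) → infDist x (frontier Ω) ≤ b → |u x| ≤ δ :=
  statement6_general n Ω hΩ c hc hlAR κ hκ q hq u hu hN a b ha δ hδ
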